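/- Let a ~ N(Re(d), r/2) and b ~ N(Im(d), r/2) be independent real Gaussian variables, for d ∈ ℂ and r > 0. Let u* = argmin_u E[(1/2) log u + a²/u] and v* = argmin_v E[(1/2) log v + b²/v]. Then (u* + v*)/2 = r + |d|². -/

import Mathlib

/-!
The objective `u ↦ E[(1/2) log u + a²/u]` equals `(1/2) log u + m/u` with `m = E[a²]`, and
`log x ≤ x - 1` at `x = 2m/u` shows that its unique minimiser on `(0, ∞)` is `u = 2m`.
For `a ~ N(Re d, r/2)` the second moment is `m = r/2 + (Re d)²`, so `u* = r + 2 (Re d)²`; likewise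
`v* = r + 2 (Im d)²`, and averaging gives `r + (Re d)² + (Im d)² = r + |d|²`.
-/

open MeasureTheory ProbabilityTheory Set
open scoped NNReal

lemma isMinOn_half_log_add_div {m : ℝ} (hm : 0 < m) :
    IsMinOn (fun u => 1 / 2 * Real.log u + m / u) (Ioi 0) (2 * m) := by
  intro u (hu : 0 < u)
  have hlog := Real.log_le_sub_one_of_pos (show 0 < 2 * m / u by positivity)
  rw [Real.log_div (by positivity) hu.ne'] at hlog
  have hhalf : m / (2 * m) = 1 / 2 := by field_simp
  simp only [mem_ofPred_eq, hhalf]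
  have hscale : 2 * m / u = 2 * (m / u) := by ring
  linarith

lemma integral_sq_gaussianReal (μ : ℝ) (v : ℝ≥0) :
    ∫ x, x ^ 2 ∂gaussianReal μ v = v + μ ^ 2 := by
  have h := variance_eq_sub (memLp_id_gaussianReal (μ := μ) (v := v) 2)
  simp only [variance_id_gaussianReal, Pi.pow_apply, id_eq, integral_id_gaussianReal] at h
  linarith

lemma integrable_sq_and_integral_sq_of_map_eq_gaussianReal {Ω : Type*} [MeasurableSpace Ω]
    {P : Measure Ω} {a : Ω → ℝ} (ha : Measurable a) {μ : ℝ} {v : ℝ≥0}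
    (hlaw : P.map a = gaussianReal μ v) :
    Integrable (fun ω => a ω ^ 2) P ∧ ∫ ω, a ω ^ 2 ∂P = v + μ ^ 2 := by
  have hsq : AEStronglyMeasurable (fun x : ℝ => x ^ 2) (P.map a) :=
    (measurable_id.pow_const 2).aestronglyMeasurable
  constructor
  · have hint : Integrable (fun x : ℝ => x ^ 2) (P.map a) := by
      rw [hlaw]
      exact (memLp_id_gaussianReal 2).integrable_sq
    exact (integrable_map_measure hsq ha.aemeasurable).mp hint
  · rw [← integral_map ha.aemeasurable hsq, hlaw, integral_sq_gaussianReal]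

lemma integral_half_log_add_sq_div {Ω : Type*} [MeasurableSpace Ω] {P : Measure Ω}
    [IsProbabilityMeasure P] {a : Ω → ℝ} (hint : Integrable (fun ω => a ω ^ 2) P) (u : ℝ) :
    ∫ ω, (1 / 2 * Real.log u + a ω ^ 2 / u) ∂P =
      1 / 2 * Real.log u + (∫ ω, a ω ^ 2 ∂P) / u := by
  rw [integral_add (integrable_const _) (hint.div_const u), integral_const, integral_div]
  simp

lemma eq_of_map_eq_gaussianReal_of_strictMin {Ω : Type*} [MeasurableSpace Ω] {P : Measure Ω}
    [IsProbabilityMeasure P] {a : Ω → ℝ} (ha : Measurable a) {μ : ℝ} {v : ℝ≥0}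
    (hv : v ≠ 0)
    (hlaw : P.map a = gaussianReal μ v) {ustar : ℝ}
    (hmin : ustar ∈ Ioi (0 : ℝ) ∧ ∀ u ∈ Ioi (0 : ℝ), ustar ≠ u →
      (∫ ω, (1 / 2 * Real.log ustar + a ω ^ 2 / ustar) ∂P)
        < ∫ ω, (1 / 2 * Real.log u + a ω ^ 2 / u) ∂P) :
    ustar = 2 * (v + μ ^ 2) := by
  obtain ⟨hint, hmoment⟩ := integrable_sq_and_integral_sq_of_map_eq_gaussianReal ha hlaw
  have hm : 0 < (v : ℝ) + μ ^ 2 := by positivity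
  by_contra hne
  have hlt := hmin.2 _ (mul_pos two_pos hm) hne
  have hle := isMinOn_half_log_add_div hm hmin.1
  simp only [integral_half_log_add_sq_div hint, hmoment] at hlt
  exact hle.not_gt hlt

theorem merlin_unbiased_general
    {Ω : Type*} [MeasureSpace Ω] [IsProbabilityMeasure (ℙ : Measure Ω)]
    (a b : Ω → ℝ) (ha : Measurable a) (hb : Measurable b)
    (d : ℂ) (r : ℝ) (hr : 0 < r)
    (hlawa : Measure.map a ℙ = gaussianReal d.re (r/2).toNNReal)
    (hlawb : Measure.map b ℙ = gaussianReal d.im (r/2).toNNReal)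
    (ustar vstar : ℝ)
    (hu : ustar ∈ Set.Ioi (0 : ℝ) ∧ ∀ u ∈ Set.Ioi (0 : ℝ), ustar ≠ u →
      (∫ ω, ((1/2) * Real.log ustar + (a ω)^2 / ustar) ∂ℙ)
        < ∫ ω, ((1/2) * Real.log u + (a ω)^2 / u) ∂ℙ)
    (hv : vstar ∈ Set.Ioi (0 : ℝ) ∧ ∀ v ∈ Set.Ioi (0 : ℝ), vstar ≠ v →
      (∫ ω, ((1/2) * Real.log vstar + (b ω)^2 / vstar) ∂ℙ)
        < ∫ ω, ((1/2) * Real.log v + (b ω)^2 / v) ∂ℙ) :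
    (ustar + vstar) / 2 = r + ‖d‖ ^ 2 := by
  have hvar_ne : (r / 2).toNNReal ≠ 0 := by simpa using half_pos hr
  have hvar : ((r / 2).toNNReal : ℝ) = r / 2 := Real.coe_toNNReal _ (half_pos hr).le
  have hustar := eq_of_map_eq_gaussianReal_of_strictMin ha hvar_ne hlawa hu
  have hvstar := eq_of_map_eq_gaussianReal_of_strictMin hb hvar_ne hlawb hv
  rw [hustar, hvstar, hvar, Complex.sq_norm, Complex.normSq_apply]
  ring

/-- for independent `a ~ N(Re d, r/2)` and `b ~ N(Im d, r/2)` with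
`r > 0`, if `u*` (resp. `v*`) minimizes `u ↦ E[(1/2) log u + a²/u]`
(resp. `v ↦ E[(1/2) log v + b²/v]`) over `(0, ∞)`, then
`(u* + v*)/2 = r + |d|²` (unbiasedness of multi-temporal MERLIN). -/
theorem merlin_unbiased
    {Ω : Type*} [MeasureSpace Ω] [IsProbabilityMeasure (ℙ : Measure Ω)]
    (a b : Ω → ℝ) (ha : Measurable a) (hb : Measurable b)
    (hab : IndepFun a b) (d : ℂ) (r : ℝ) (hr : 0 < r)
    (hlawa : Measure.map a ℙ = gaussianReal d.re (r/2).toNNReal)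
    (hlawb : Measure.map b ℙ = gaussianReal d.im (r/2).toNNReal)
    (ustar vstar : ℝ)
    (hu : ustar ∈ Set.Ioi (0 : ℝ) ∧ ∀ u ∈ Set.Ioi (0 : ℝ), ustar ≠ u →
      (∫ ω, ((1/2) * Real.log ustar + (a ω)^2 / ustar) ∂ℙ)
        < ∫ ω, ((1/2) * Real.log u + (a ω)^2 / u) ∂ℙ)
    (hv : vstar ∈ Set.Ioi (0 : ℝ) ∧ ∀ v ∈ Set.Ioi (0 : ℝ), vstar ≠ v →
      (∫ ω, ((1/2) * Real.log vstar + (b ω)^2 / vstar) ∂ℙ)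
        < ∫ ω, ((1/2) * Real.log v + (b ω)^2 / v) ∂ℙ) :
    (ustar + vstar) / 2 = r + ‖d‖ ^ 2 :=
  merlin_unbiased_general a b ha hb d r hr hlawa hlawb ustar vstar hu hv
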